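/- arXiv:2002.03719 — 3 statements merged into one kernel-verified Lean document; each statement's English description precedes it below -/
import Mathlib

section
/- Let p be a prime, let k be an algebraically closed field of characteristic p, and let h_1, …, h_n be integers with 1 ≤ h_i ≤ p for every i. For indeterminates Y_1, …, Y_n, write ∏_{i=1}^n (X − Y_i)^{p − h_i} = ∑_j a_j X^j with a_j ∈ k[Y_1, …, Y_n]. Then there exist pairwise distinct elements p_1, …, p_n of k such that 1/∏_{i=1}^n (x − p_i)^{h_i} is exact if and only if the ideal of the polynomial ring k[Y_1, …, Y_n, S] generated by the set {a_j : j ≡ p − 1 (mod p)} together with the element 1 − S · ∏_{1 ≤ j < l ≤ n} (Y_j − Y_l) is not the unit ideal. -/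
/-!
Write `∏ (x - pᵢ)^(-hᵢ) = N / D ^ p` with `N = ∏ (x - pᵢ)^(p - hᵢ)` and `D = ∏ (x - pᵢ)`.
Since `(D ^ p)' = 0`, this is exact iff `N` has a polynomial primitive, i.e. iff the
coefficients of `N` in degrees `≡ -1 (mod p)` vanish. For the forward direction, clearing the
denominator of a primitive `u / v` gives `N v ^ p = (u v ^ (p - 1))' D ^ p`; applying
`(d/dx)^(p - 1)`, which kills derivatives and commutes with multiplication by `v ^ p` and `D ^ p`,
shows that the `(p - 1)`-st derivative of `N` vanishes, and Wilson's theorem turns this into the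
vanishing of those coefficients. The coefficients of `N` are the `aⱼ` evaluated at the `pᵢ`,
the generator `1 - S ∏ (Yⱼ - Yₗ)` has a zero exactly over distinct `pᵢ`, and the weak
Nullstellensatz turns the existence of a common zero into properness of the ideal.
-/

open Polynomial

/-- `HasDerivRF f g` means `g` is the formal derivative of the rational function `f` in `k(x)`:
if `f = u / v` with `v ≠ 0`, then `g = (u' v - u v') / v ^ 2`. -/
def HasDerivRF {k : Type*} [Field k] (f g : RatFunc k) : Prop :=
  ∃ u v : Polynomial k, v ≠ 0 ∧
    f = algebraMap (Polynomial k) (RatFunc k) u / algebraMap (Polynomial k) (RatFunc k) v ∧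
    g = algebraMap (Polynomial k) (RatFunc k)
          (Polynomial.derivative u * v - u * Polynomial.derivative v) /
        algebraMap (Polynomial k) (RatFunc k) (v ^ 2)

/-- A rational function is exact if it is the formal derivative of some rational function. -/
def IsExactRF {k : Type*} [Field k] (g : RatFunc k) : Prop := ∃ f : RatFunc k, HasDerivRF f g

namespace Polynomial

section CommRing
variable {R : Type*} [CommRing R]

theorem iterate_derivative_mul_of_derivative_eq_zero {c : R[X]} (hc : derivative c = 0)
    (m : ℕ) (f : R[X]) : derivative^[m] (f * c) = derivative^[m] f * c := by
  induction m generalizing f with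
  | zero => rfl
  | succ m ih => rw [Function.iterate_succ_apply, derivative_mul, hc, mul_zero, add_zero, ih,
      Function.iterate_succ_apply]

variable (p : ℕ) [CharP R p]

theorem derivative_pow_char (f : R[X]) : derivative (f ^ p) = 0 := by
  rw [derivative_pow, CharP.cast_eq_zero, map_zero, zero_mul, zero_mul]

theorem iterate_derivative_char (hp : 0 < p) (f : R[X]) : derivative^[p] f = 0 := by
  ext m
  rw [coeff_iterate_derivative, coeff_zero, nsmul_eq_mul,
    (CharP.cast_eq_zero_iff R p _).mpr, zero_mul]
  exact (Nat.dvd_factorial hp le_rfl).trans (Nat.factorial_dvd_descFactorial _ _)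

variable {p}

-- In characteristic `p` the exponent `p - 1` acts as `-1`.
theorem derivative_mul_pow_sub_one (hp : 2 ≤ p) (u v : R[X]) :
    derivative (u * v ^ (p - 1)) = v ^ (p - 2) * (derivative u * v - u * derivative v) := by
  obtain ⟨q, rfl⟩ : ∃ q, p = q + 2 := ⟨p - 2, by omega⟩
  have h : ((q + 1 : ℕ) : R) = -1 := by
    rw [eq_neg_iff_add_eq_zero, ← Nat.cast_add_one, CharP.cast_eq_zero]
  rw [derivative_mul, derivative_pow, show q + 2 - 1 = q + 1 by omega,
    show q + 2 - 2 = q by omega, Nat.add_sub_cancel, h]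
  simp only [map_neg, map_one]
  ring

theorem coeff_eq_zero_of_iterate_derivative_eq_zero (hp : p.Prime) {f : R[X]}
    (hf : derivative^[p - 1] f = 0) {j : ℕ} (hj : j ≡ p - 1 [MOD p]) : f.coeff j = 0 := by
  have hle : p - 1 ≤ j := by
    have := Nat.mod_le j p
    rwa [hj, Nat.mod_eq_of_lt (Nat.sub_lt hp.pos one_pos)] at this
  -- Wilson: `j (j - 1) ⋯ (j - p + 2) ≡ (p - 1)! ≡ -1`.
  have hwilson : (j.descFactorial (p - 1) : R) = -1 := by
    have := Fact.mk hp
    rw [← descPochhammer_eval_eq_descFactorial, CharP.natCast_eq_natCast' R p hj,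
      descPochhammer_eval_eq_descFactorial, Nat.descFactorial_self,
      ← map_natCast (ZMod.castHom (dvd_refl p) R), ZMod.wilsons_lemma, map_neg, map_one]
  simpa [coeff_iterate_derivative, Nat.sub_add_cancel hle, hwilson] using
    congr_arg (coeff · (j - (p - 1))) hf

end CommRing

theorem exists_derivative_eq_of_coeff_eq_zero {k : Type*} [Field k] {p : ℕ} [CharP k p]
    (hp : 0 < p) {f : k[X]} (hf : ∀ j, j ≡ p - 1 [MOD p] → f.coeff j = 0) :
    ∃ g : k[X], derivative g = f := by
  refine ⟨∑ i ∈ f.support, C (f.coeff i / (i + 1)) * X ^ (i + 1), ?_⟩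
  conv_rhs => rw [as_sum_support_C_mul_X_pow f]
  rw [derivative_sum]
  refine Finset.sum_congr rfl fun i hi => ?_
  have hi1 : (i : k) + 1 ≠ 0 := by
    intro h0
    refine mem_support_iff.mp hi (hf i ?_)
    rw [← CharP.natCast_eq_natCast k p, ← add_left_inj (1 : k), h0, Nat.cast_sub hp,
      Nat.cast_one, sub_add_cancel, CharP.cast_eq_zero]
  rw [derivative_C_mul_X_pow, Nat.add_sub_cancel, Nat.cast_add_one, div_mul_cancel₀ _ hi1]

end Polynomial

section RatFunc
variable {k : Type*} [Field k]

local notation "φ" => algebraMap k[X] (RatFunc k)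

theorem isExactRF_div_iff {p : ℕ} (hp : p.Prime) [CharP k p] (N : k[X]) {D : k[X]}
    (hD : D ≠ 0) (hD' : derivative D = 0) :
    IsExactRF (φ N / φ D) ↔ ∀ j, j ≡ p - 1 [MOD p] → N.coeff j = 0 := by
  have hφ : ∀ {w : k[X]}, w ≠ 0 → φ w ≠ 0 := fun hw =>
    (map_ne_zero_iff _ (RatFunc.algebraMap_injective k)).mpr hw
  constructor
  · rintro ⟨-, u, v, hv, -, hg⟩ j hj
    have hcross : N * v ^ 2 = (derivative u * v - u * derivative v) * D := by
      apply RatFunc.algebraMap_injective k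
      rw [map_mul, map_mul, ← div_eq_div_iff (hφ hD) (hφ (pow_ne_zero 2 hv)), hg]
    have hkey : N * v ^ p = derivative (u * v ^ (p - 1)) * D := by
      rw [derivative_mul_pow_sub_one hp.two_le, mul_assoc, ← hcross,
        ← pow_sub_mul_pow v hp.two_le]
      ring
    have hvanish : derivative^[p - 1] N * v ^ p = 0 := by
      rw [← iterate_derivative_mul_of_derivative_eq_zero (derivative_pow_char p v), hkey,
        iterate_derivative_mul_of_derivative_eq_zero hD', ← Function.iterate_succ_apply,
        Nat.succ_eq_add_one, Nat.sub_add_cancel hp.one_le, iterate_derivative_char p hp.pos,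
        zero_mul]
    exact coeff_eq_zero_of_iterate_derivative_eq_zero hp
      ((mul_eq_zero.mp hvanish).resolve_right (pow_ne_zero p hv)) hj
  · intro hN
    obtain ⟨M, hM⟩ := exists_derivative_eq_of_coeff_eq_zero hp.pos hN
    refine ⟨φ M / φ D, M, D, hD, rfl, ?_⟩
    rw [hD', mul_zero, sub_zero, hM, map_mul, map_pow, pow_two, mul_div_mul_right _ _ (hφ hD)]

theorem inv_prod_X_sub_C_pow_eq_div {ι : Type*} [Fintype ι] {p : ℕ} (P : ι → k) (h : ι → ℕ)
    (hh : ∀ i, h i ≤ p) :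
    (∏ i, (RatFunc.X - RatFunc.C (P i)) ^ h i)⁻¹ =
      φ (∏ i, (X - C (P i)) ^ (p - h i)) / φ ((∏ i, (X - C (P i))) ^ p) := by
  have hsplit : (∏ i, (X - C (P i))) ^ p =
      (∏ i, (X - C (P i)) ^ (p - h i)) * ∏ i, (X - C (P i)) ^ h i := by
    simp only [← Finset.prod_pow, ← Finset.prod_mul_distrib, ← pow_add, Nat.sub_add_cancel (hh _)]
  have hne : φ (∏ i, (X - C (P i)) ^ (p - h i)) ≠ 0 :=
    (map_ne_zero_iff _ (RatFunc.algebraMap_injective k)).mpr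
      (Finset.prod_ne_zero_iff.mpr fun i _ => pow_ne_zero _ (X_sub_C_ne_zero (P i)))
  rw [hsplit, map_mul, div_mul_cancel_left₀ hne]
  simp [RatFunc.algebraMap_X, RatFunc.algebraMap_C]

end RatFunc

theorem isExactRF_inv_prod_X_sub_C_pow_iff {k ι : Type*} [Field k] [Fintype ι] {p : ℕ}
    (hp : p.Prime) [CharP k p] (P : ι → k) (h : ι → ℕ) (hh : ∀ i, h i ≤ p) :
    IsExactRF ((∏ i, (RatFunc.X - RatFunc.C (P i)) ^ h i)⁻¹) ↔
      ∀ j, j ≡ p - 1 [MOD p] → (∏ i, (X - C (P i)) ^ (p - h i)).coeff j = 0 := by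
  rw [inv_prod_X_sub_C_pow_eq_div P h hh, isExactRF_div_iff hp _
    (pow_ne_zero _ (Finset.prod_ne_zero_iff.mpr fun i _ => X_sub_C_ne_zero (P i)))
    (derivative_pow_char p _)]

theorem MvPolynomial.eval_coeff_prod_X_sub_C_pow {R ι : Type*} [CommRing R] [Fintype ι]
    (x : ι → R) (e : ι → ℕ) (j : ℕ) :
    eval x ((∏ i, (Polynomial.X - Polynomial.C (X i)) ^ e i : (MvPolynomial ι R)[X]).coeff j) =
      (∏ i, (Polynomial.X - Polynomial.C (x i)) ^ e i).coeff j := by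
  rw [← Polynomial.coeff_map]
  simp [Polynomial.map_prod]

theorem MvPolynomial.span_ne_top_iff_exists_eval_eq_zero {k σ : Type*} [Field k] [IsAlgClosed k]
    [Finite σ] (S : Set (MvPolynomial σ k)) :
    Ideal.span S ≠ ⊤ ↔ ∃ x : σ → k, ∀ q ∈ S, eval x q = 0 := by
  constructor
  · intro hS
    obtain ⟨I, hI, hSI⟩ := Ideal.exists_le_maximal _ hS
    obtain ⟨x, rfl⟩ := eq_vanishingIdeal_singleton_of_isMaximal k hI
    exact ⟨x, fun q hq => (mem_vanishingIdeal_singleton_iff x q).mp (hSI (Ideal.subset_span hq))⟩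
  · rintro ⟨x, hx⟩ htop
    refine RingHom.ker_ne_top (eval x) (eq_top_iff.mpr ?_)
    exact htop ▸ Ideal.span_le.mpr fun q hq => RingHom.mem_ker.mpr (hx q hq)

theorem Finset.prod_filter_lt_sub_ne_zero_iff {ι R : Type*} [Fintype ι] [LinearOrder ι]
    [CommRing R] [IsDomain R] (P : ι → R) :
    ∏ q ∈ univ.filter (fun q : ι × ι => q.1 < q.2), (P q.1 - P q.2) ≠ 0 ↔
      Function.Injective P := by
  simp only [prod_ne_zero_iff, mem_filter, mem_univ, true_and, ne_eq, sub_eq_zero]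
  exact ⟨fun h => .of_lt_imp_ne fun a b hab => h (a, b) hab, fun h q hq => h.ne hq.ne⟩

open MvPolynomial in
/-- Gröbner-basis criterion: with `aⱼ ∈ k[Y₁,…,Yₙ]` the coefficients of
`∏ᵢ (X - Yᵢ)^{p - hᵢ}`, the form `1/∏ (x - pᵢ)^{hᵢ}` is exact for some pairwise distinct
`pᵢ ∈ k` iff the ideal of `k[Y₁,…,Yₙ,S]` generated by the `aⱼ` for `j ≡ p - 1 (mod p)`
together with `1 - S·∏_{j<l}(Yⱼ - Yₗ)` is not the unit ideal. -/
theorem stmt9 {k : Type*} [Field k] [IsAlgClosed k] (p : ℕ) (hp : p.Prime) [CharP k p]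
    (n : ℕ) (h : Fin n → ℕ) (hh : ∀ i, 1 ≤ h i ∧ h i ≤ p) :
    (∃ P : Fin n → k, Function.Injective P ∧
        IsExactRF ((∏ i, (RatFunc.X - RatFunc.C (P i)) ^ h i)⁻¹)) ↔
      Ideal.span
        ({q : MvPolynomial (Option (Fin n)) k | ∃ j : ℕ, j ≡ p - 1 [MOD p] ∧
            q = MvPolynomial.rename some
              ((∏ i, (Polynomial.X - Polynomial.C (MvPolynomial.X i)) ^ (p - h i)
                  : Polynomial (MvPolynomial (Fin n) k)).coeff j)} ∪
          {1 - MvPolynomial.X none *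
            ∏ q ∈ Finset.univ.filter (fun q : Fin n × Fin n => q.1 < q.2),
              (MvPolynomial.X (some q.1) - MvPolynomial.X (some q.2))}) ≠ ⊤ := by
  rw [span_ne_top_iff_exists_eval_eq_zero]
  have hexact (P : Fin n → k) := isExactRF_inv_prod_X_sub_C_pow_iff hp P h fun i => (hh i).2
  constructor
  · rintro ⟨P, hP, hex⟩
    refine ⟨fun o => o.elim (∏ q ∈ Finset.univ.filter (fun q : Fin n × Fin n => q.1 < q.2),
      (P q.1 - P q.2))⁻¹ P, ?_⟩
    rintro q (⟨j, hj, rfl⟩ | rfl)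
    · rw [eval_rename, eval_coeff_prod_X_sub_C_pow]
      exact (hexact P).mp hex j hj
    · simp [(Finset.prod_filter_lt_sub_ne_zero_iff P).mpr hP]
  · rintro ⟨x, hx⟩
    have hΔ : x none * ∏ q ∈ Finset.univ.filter (fun q : Fin n × Fin n => q.1 < q.2),
        (x (some q.1) - x (some q.2)) = 1 := by
      have h1 := hx _ (Or.inr rfl)
      simp only [map_sub, map_one, map_mul, map_prod, MvPolynomial.eval_X] at h1
      exact (sub_eq_zero.mp h1).symm
    refine ⟨x ∘ some, (Finset.prod_filter_lt_sub_ne_zero_iff _).mp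
      (right_ne_zero_of_mul_eq_one hΔ), (hexact _).mpr fun j hj => ?_⟩
    rw [← eval_coeff_prod_X_sub_C_pow, ← eval_rename]
    exact hx _ (Or.inl ⟨j, hj, rfl⟩)
end

section
/- Let k be a field of characteristic p > 0 and let g, h be rational functions in k(x) with g ≠ 0. Then the rational function g^p · h is exact if and only if h is exact. -/
/-! The derivative of a `p`-th power vanishes, so multiplying by `c ^ p` commutes with
differentiation and preserves exactness; multiplying by `g⁻¹ ^ p` undoes it. -/

open Polynomial

theorem Polynomial.derivative_pow_char_s11 {k : Type*} [CommSemiring k] (p : ℕ) [CharP k p]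
    (q : k[X]) : derivative (q ^ p) = 0 := by
  simp [derivative_pow, CharP.cast_eq_zero]

theorem HasDerivRF.pow_char_mul {k : Type*} [Field k] (p : ℕ) [CharP k p] {f h : RatFunc k}
    (hfh : HasDerivRF f h) (c : RatFunc k) : HasDerivRF (c ^ p * f) (c ^ p * h) := by
  obtain ⟨u, v, hv, rfl, rfl⟩ := hfh
  rw [← c.num_div_denom]
  have hb : algebraMap k[X] (RatFunc k) c.denom ≠ 0 := by simp [c.denom_ne_zero]
  have hv' : algebraMap k[X] (RatFunc k) v ≠ 0 := by simpa using hv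
  refine ⟨c.num ^ p * u, c.denom ^ p * v, mul_ne_zero (pow_ne_zero _ c.denom_ne_zero) hv, ?_, ?_⟩
  all_goals
    simp only [derivative_mul, derivative_pow_char_s11, zero_mul, zero_add, map_mul, map_pow, map_sub,
      div_pow]
    field_simp

theorem IsExactRF.pow_char_mul {k : Type*} [Field k] (p : ℕ) [CharP k p] {h : RatFunc k}
    (hh : IsExactRF h) (c : RatFunc k) : IsExactRF (c ^ p * h) :=
  let ⟨f, hfh⟩ := hh
  ⟨c ^ p * f, hfh.pow_char_mul p c⟩

theorem stmt11_general {k : Type*} [Field k] (p : ℕ) [CharP k p]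
    (g h : RatFunc k) (hg : g ≠ 0) :
    IsExactRF (g ^ p * h) ↔ IsExactRF h := by
  refine ⟨fun hgh => ?_, fun hh => hh.pow_char_mul p g⟩
  have hcancel : g⁻¹ ^ p * (g ^ p * h) = h := by
    rw [← mul_assoc, ← mul_pow, inv_mul_cancel₀ hg, one_pow, one_mul]
  simpa only [hcancel] using hgh.pow_char_mul p g⁻¹

/-- Over a field of characteristic `p > 0`, for rational functions `g ≠ 0` and `h`,
`g^p · h` is exact iff `h` is exact. -/
theorem stmt11 {k : Type*} [Field k] (p : ℕ) [CharP k p] (hp : 0 < p)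
    (g h : RatFunc k) (hg : g ≠ 0) :
    IsExactRF (g ^ p * h) ↔ IsExactRF h :=
  stmt11_general p g h hg
end

section
/- Let k be a field of characteristic p > 0, let n ≥ 1, let h_1, …, h_n be integers with 1 < h_i < p for every i, and let P_1, …, P_n be pairwise distinct elements of k. If the rational function F = 1/∏_{i=1}^n (x − P_i)^{h_i} is exact, then there exists a polynomial g over k with deg g < ∑_{i=1}^n (h_i − 1) such that F is the formal derivative of g/∏_{i=1}^n (x − P_i)^{h_i − 1}. -/
/-!
Decompose `F` into partial fractions `∑ᵢ rᵢ / (x - Pᵢ) ^ hᵢ` with `deg rᵢ < hᵢ`. A derivative has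
zero residue at every point, because the coefficient of `X⁻¹` in the derivative of a Laurent series
is `0 •` (the coefficient of `X⁰`). As `F` is exact, the coefficient of `(x - Pᵢ) ^ (hᵢ - 1)` in the
expansion of `rᵢ` at `Pᵢ` therefore vanishes. Every remaining term `c (x - Pᵢ) ^ j / (x - Pᵢ) ^ hᵢ`,
`j < hᵢ - 1`, is the derivative of `c (x - Pᵢ) ^ j / ((j + 1 - hᵢ) (x - Pᵢ) ^ (hᵢ - 1))`, where
`j + 1 - hᵢ ≠ 0` in `k` because `hᵢ < p`; these antiderivatives add up to
`g / ∏ᵢ (x - Pᵢ) ^ (hᵢ - 1)` with `deg g < ∑ᵢ (hᵢ - 1)`.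
-/

open Polynomial

open LaurentSeries

theorem Finset.sum_mul_prod_erase_div_prod {F ι : Type*} [Field F] [DecidableEq ι]
    (s : Finset ι) (a b : ι → F) (hb : ∀ i ∈ s, b i ≠ 0) :
    (∑ i ∈ s, a i * ∏ k ∈ s.erase i, b k) / ∏ i ∈ s, b i = ∑ i ∈ s, a i / b i := by
  rw [Finset.sum_div]
  refine Finset.sum_congr rfl fun i hi => ?_
  rw [← Finset.mul_prod_erase s b hi, mul_div_mul_right _ _
    (Finset.prod_ne_zero_iff.2 fun k hk => hb k (Finset.mem_of_mem_erase hk))]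

namespace Polynomial

theorem derivative_taylor {R : Type*} [CommSemiring R] (a : R) (f : R[X]) :
    derivative (taylor a f) = taylor a (derivative f) := by
  simp [taylor_apply, derivative_comp]

theorem X_sub_C_mul_derivative_X_sub_C_pow {R : Type*} [CommRing R] (a : R) (m : ℕ) :
    (X - C a) * derivative ((X - C a) ^ m) = C (m : R) * (X - C a) ^ m := by
  rcases m with _ | m
  · simp
  · rw [derivative_X_sub_C_pow, Nat.add_sub_cancel, pow_succ]
    ring

section Domain

variable {R : Type*} [CommRing R] [IsDomain R] {ι : Type*} [DecidableEq ι]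

theorem degree_sum_mul_prod_erase_lt {s : Finset ι} {g r : ι → R[X]} (hg : ∀ i ∈ s, g i ≠ 0)
    (hr : ∀ i ∈ s, (r i).degree < (g i).degree) :
    (∑ i ∈ s, r i * ∏ k ∈ s.erase i, g k).degree < (∏ i ∈ s, g i).degree := by
  have hprod (t : Finset ι) (ht : t ⊆ s) : ∏ k ∈ t, g k ≠ 0 :=
    Finset.prod_ne_zero_iff.2 fun k hk => hg k (ht hk)
  refine (degree_sum_le _ _).trans_lt <| (Finset.sup_lt_iff
    (bot_lt_iff_ne_bot.2 (degree_ne_bot.2 (hprod s subset_rfl)))).2 fun i hi => ?_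
  rw [← Finset.mul_prod_erase s g hi, degree_mul, degree_mul]
  exact WithBot.add_lt_add_right (degree_ne_bot.2 (hprod _ (Finset.erase_subset i s))) (hr i hi)

theorem exists_eq_sum_mul_prod_erase {s : Finset ι} {f : R[X]} {g : ι → R[X]}
    (hg : ∀ i ∈ s, (g i).Monic) (hcop : Set.Pairwise s fun i j => IsCoprime (g i) (g j))
    (hf : f.degree < (∏ i ∈ s, g i).degree) :
    ∃ r : ι → R[X], (∀ i ∈ s, (r i).degree < (g i).degree) ∧
      f = ∑ i ∈ s, r i * ∏ k ∈ s.erase i, g k := by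
  obtain ⟨q, r, hr, hqr⟩ := eq_quo_mul_prod_add_sum_rem_mul_prod f hg hcop
  refine ⟨r, hr, ?_⟩
  have hrem := degree_sum_mul_prod_erase_lt (fun i hi => (hg i hi).ne_zero) hr
  have hq : q * ∏ i ∈ s, g i = 0 :=
    eq_zero_of_dvd_of_degree_lt (dvd_mul_left _ _) <| by
      rw [eq_sub_of_add_eq hqr.symm]
      exact (degree_sub_le _ _).trans_lt (max_lt hf hrem)
  rw [hqr, hq, zero_add]

end Domain

variable {K : Type*} [Field K]

theorem coeff_X_mul_derivative (S : K[X]) (j : ℕ) :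
    (X * derivative S).coeff j = j * S.coeff j := by
  cases j <;> simp [coeff_X_mul, coeff_derivative, mul_comm]

theorem exists_X_mul_derivative_sub_C_mul_eq {R : K[X]} {m : ℕ} (hdeg : R.degree ≤ m)
    (hm : R.coeff m = 0) (hchar : ∀ j, 0 < j → j ≤ m → (j : K) ≠ 0) :
    ∃ S : K[X], S.degree < m ∧ X * derivative S - C (m : K) * S = R := by
  set S := ∑ j ∈ Finset.range m, C (R.coeff j / ((j : K) - m)) * X ^ j
  have hS (j : ℕ) : S.coeff j = if j < m then R.coeff j / ((j : K) - m) else 0 := by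
    simp [S]
  refine ⟨S, (degree_lt_iff_coeff_zero S m).2 fun j hj => by simp [hS, not_lt.2 hj], ?_⟩
  ext j
  rw [coeff_sub, coeff_X_mul_derivative, coeff_C_mul, ← sub_mul, hS]
  split_ifs with hj
  · have hjm : (j : K) - m ≠ 0 := by
      have := hchar (m - j) (by omega) (by omega)
      rwa [Nat.cast_sub hj.le, ← neg_sub, neg_ne_zero] at this
    field_simp
  · rw [mul_zero, eq_comm]
    rcases (not_lt.1 hj).eq_or_lt with rfl | hlt
    · exact hm
    · exact coeff_eq_zero_of_degree_lt (hdeg.trans_lt (by exact_mod_cast hlt))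

end Polynomial

namespace LaurentSeries

open HahnSeries

variable {R : Type*} [CommRing R]

theorem derivative_coeff (f : R⸨X⸩) (n : ℤ) :
    (derivative R f).coeff n = (n + 1) • f.coeff (n + 1) := by
  simp

theorem derivative_coeff_neg_one (f : R⸨X⸩) : (derivative R f).coeff (-1) = 0 := by
  simp

theorem derivative_one : derivative R (1 : R⸨X⸩) = 0 := by
  simp [← HahnSeries.single_zero_one]

theorem derivative_single_mul (m : ℤ) (c : R) (f : R⸨X⸩) :
    derivative R (single m c * f) = single m c * derivative R f + single (m - 1) (m • c) * f := by
  ext n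
  simp only [derivative_coeff, HahnSeries.coeff_add, coeff_single_mul]
  rw [show n - (m - 1) = n + 1 - m by ring, show n - m + 1 = n + 1 - m by ring]
  simp only [zsmul_eq_mul]
  push_cast
  ring

theorem algebraMap_monomial (m : ℕ) (c : R) :
    algebraMap R[X] R⸨X⸩ (monomial m c) = single (m : ℤ) c := by
  rw [← C_mul_X_pow_eq_monomial, map_mul, map_pow]
  simp [Polynomial.algebraMap_hahnSeries_apply]

theorem coeff_algebraMap (u : R[X]) (n : ℕ) :
    (algebraMap R[X] R⸨X⸩ u).coeff n = u.coeff n := by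
  rw [Polynomial.algebraMap_hahnSeries_apply, ofPowerSeries_apply_coeff, Polynomial.coeff_coe]

theorem derivative_algebraMap_mul (u : R[X]) (f : R⸨X⸩) :
    derivative R (algebraMap R[X] R⸨X⸩ u * f) =
      algebraMap R[X] R⸨X⸩ (Polynomial.derivative u) * f +
        algebraMap R[X] R⸨X⸩ u * derivative R f := by
  induction u using Polynomial.induction_on' with
  | add p q hp hq =>
    simp only [map_add, add_mul, hp, hq]
    abel
  | monomial m c =>
    rw [algebraMap_monomial, derivative_single_mul, derivative_monomial, add_comm]
    rcases m with _ | m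
    · simp
    · rw [algebraMap_monomial]
      congr 2
      simp [mul_comm]

theorem derivative_algebraMap (u : R[X]) :
    derivative R (algebraMap R[X] R⸨X⸩ u) = algebraMap R[X] R⸨X⸩ (Polynomial.derivative u) := by
  rw [← mul_one (algebraMap R[X] R⸨X⸩ u), derivative_algebraMap_mul, derivative_one]
  simp

variable {K : Type*} [Field K]

theorem derivative_algebraMap_div (u : K[X]) {v : K[X]} (hv : v ≠ 0) :
    derivative K (algebraMap K[X] K⸨X⸩ u / algebraMap K[X] K⸨X⸩ v) =
      algebraMap K[X] K⸨X⸩ (Polynomial.derivative u * v - u * Polynomial.derivative v) /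
        algebraMap K[X] K⸨X⸩ (v ^ 2) := by
  have hv' : algebraMap K[X] K⸨X⸩ v ≠ 0 :=
    (map_ne_zero_iff _ (Polynomial.algebraMap_hahnSeries_injective ℤ)).2 hv
  set f := algebraMap K[X] K⸨X⸩ u / algebraMap K[X] K⸨X⸩ v
  have hu : algebraMap K[X] K⸨X⸩ u = algebraMap K[X] K⸨X⸩ v * f := by
    rw [mul_div_cancel₀ _ hv']
  have hu' := derivative_algebraMap_mul v f
  rw [← hu, derivative_algebraMap] at hu'
  rw [map_sub, map_mul, map_mul, map_pow, hu', hu]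
  field_simp
  ring

theorem coeff_algebraMap_div_eq_zero_of_neg (u : K[X]) {w : K[X]} (hw : w.coeff 0 ≠ 0)
    {n : ℤ} (hn : n < 0) : (algebraMap K[X] K⸨X⸩ u / algebraMap K[X] K⸨X⸩ w).coeff n = 0 := by
  have hw' : PowerSeries.constantCoeff (w : PowerSeries K) ≠ 0 := by simpa using hw
  have hquot : algebraMap K[X] K⸨X⸩ u / algebraMap K[X] K⸨X⸩ w =
      ofPowerSeries ℤ K (u * (w : PowerSeries K)⁻¹) := by
    rw [div_eq_iff, Polynomial.algebraMap_hahnSeries_apply,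
      Polynomial.algebraMap_hahnSeries_apply, ← map_mul, mul_assoc,
      PowerSeries.inv_mul_cancel _ hw', mul_one]
    rw [Ne, map_eq_zero_iff _ (Polynomial.algebraMap_hahnSeries_injective ℤ)]
    rintro rfl
    simp at hw
  rw [hquot, PowerSeries.coeff_coe, if_pos hn]

end LaurentSeries

section RationalFunctions

variable {K : Type*} [Field K]

theorem RatFunc.X_sub_C_pow_eq_algebraMap (a : K) (m : ℕ) :
    (X - C a : RatFunc K) ^ m =
      algebraMap K[X] (RatFunc K) ((Polynomial.X - Polynomial.C a) ^ m) := by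
  simp [algebraMap_X, algebraMap_C]

namespace HasDerivRF

theorem zero : HasDerivRF (0 : RatFunc K) 0 :=
  ⟨0, 1, one_ne_zero, by simp, by simp⟩

theorem add {f₁ g₁ f₂ g₂ : RatFunc K} (h₁ : HasDerivRF f₁ g₁) (h₂ : HasDerivRF f₂ g₂) :
    HasDerivRF (f₁ + f₂) (g₁ + g₂) := by
  obtain ⟨u₁, v₁, hv₁, rfl, rfl⟩ := h₁
  obtain ⟨u₂, v₂, hv₂, rfl, rfl⟩ := h₂
  have e₁ := RatFunc.algebraMap_ne_zero hv₁
  have e₂ := RatFunc.algebraMap_ne_zero hv₂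
  refine ⟨u₁ * v₂ + u₂ * v₁, v₁ * v₂, mul_ne_zero hv₁ hv₂, ?_, ?_⟩
  · simp only [map_add, map_mul]
    field_simp
  · simp only [derivative_mul, map_add, map_mul, map_sub, map_pow]
    field_simp
    ring

theorem sum {ι : Type*} {s : Finset ι} {f g : ι → RatFunc K}
    (h : ∀ i ∈ s, HasDerivRF (f i) (g i)) : HasDerivRF (∑ i ∈ s, f i) (∑ i ∈ s, g i) := by
  classical
  induction s using Finset.induction_on with
  | empty => simpa using zero
  | insert x s hx ih =>
    rw [Finset.sum_insert hx, Finset.sum_insert hx]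
    exact (h x (Finset.mem_insert_self x s)).add
      (ih fun i hi => h i (Finset.mem_insert_of_mem hi))

theorem laurent {f g : RatFunc K} (hfg : HasDerivRF f g) (a : K) :
    HasDerivRF (RatFunc.laurent a f) (RatFunc.laurent a g) := by
  obtain ⟨u, v, hv, rfl, rfl⟩ := hfg
  refine ⟨taylor a u, taylor a v, fun h => hv (by simpa using h), ?_, ?_⟩ <;>
    simp only [map_div₀, RatFunc.laurent_algebraMap, map_sub, taylor_mul, taylor_pow,
      derivative_taylor]

theorem coe_eq_derivative {f g : RatFunc K} (hfg : HasDerivRF f g) :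
    (g : K⸨X⸩) = derivative K (f : K⸨X⸩) := by
  obtain ⟨u, v, hv, rfl, rfl⟩ := hfg
  rw [RatFunc.algebraMap_apply_div, RatFunc.algebraMap_apply_div, derivative_algebraMap_div u hv]

end HasDerivRF

theorem hasDerivRF_algebraMap_div_X_sub_C_pow (a : K) (s : K[X]) (m : ℕ) :
    HasDerivRF (algebraMap K[X] (RatFunc K) s / (RatFunc.X - RatFunc.C a) ^ m)
      (algebraMap K[X] (RatFunc K) (derivative s * (X - C a) - C (m : K) * s) /
        (RatFunc.X - RatFunc.C a) ^ (m + 1)) := by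
  have hv : (X - C a : K[X]) ^ m ≠ 0 := pow_ne_zero _ (X_sub_C_ne_zero a)
  refine ⟨s, (X - C a) ^ m, hv, by rw [RatFunc.X_sub_C_pow_eq_algebraMap], ?_⟩
  rw [RatFunc.X_sub_C_pow_eq_algebraMap, div_eq_div_iff
    (RatFunc.algebraMap_ne_zero (pow_ne_zero _ (X_sub_C_ne_zero a)))
    (RatFunc.algebraMap_ne_zero (pow_ne_zero _ hv)), ← map_mul, ← map_mul]
  congr 1
  linear_combination (s * (X - C a) ^ m) * X_sub_C_mul_derivative_X_sub_C_pow a m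

theorem exists_hasDerivRF_algebraMap_div_X_sub_C_pow (a : K) {r : K[X]} {m : ℕ}
    (hdeg : r.degree ≤ m) (hres : (taylor a r).coeff m = 0)
    (hchar : ∀ j, 0 < j → j ≤ m → (j : K) ≠ 0) :
    ∃ s : K[X], s.degree < m ∧
      HasDerivRF (algebraMap K[X] (RatFunc K) s / (RatFunc.X - RatFunc.C a) ^ m)
        (algebraMap K[X] (RatFunc K) r / (RatFunc.X - RatFunc.C a) ^ (m + 1)) := by
  obtain ⟨S, hS, hSr⟩ :=
    exists_X_mul_derivative_sub_C_mul_eq (by rwa [degree_taylor]) hres hchar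
  refine ⟨taylor (-a) S, by rwa [degree_taylor], ?_⟩
  convert hasDerivRF_algebraMap_div_X_sub_C_pow a (taylor (-a) S) m using 3
  have hr := congrArg (taylor (-a)) hSr
  rw [taylor_taylor, neg_add_cancel, taylor_zero] at hr
  rw [← hr, map_sub, taylor_mul, taylor_mul, taylor_X, taylor_C, derivative_taylor, map_neg,
    ← sub_eq_add_neg, mul_comm]

namespace RatFunc

/-- `laurent a` substitutes `X + a` for `X`, so this is the coefficient of `(X - a)⁻¹` in the
Laurent expansion at `a`. -/
noncomputable def residue (a : K) : RatFunc K →+ K :=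
  AddMonoidHom.mk' (fun f => ((laurent a f : RatFunc K) : K⸨X⸩).coeff (-1)) fun f g => by simp

theorem residue_apply (a : K) (f : RatFunc K) :
    residue a f = ((laurent a f : RatFunc K) : K⸨X⸩).coeff (-1) := rfl

theorem _root_.HasDerivRF.residue_eq_zero {f g : RatFunc K} (hfg : HasDerivRF f g) (a : K) :
    residue a g = 0 := by
  rw [residue_apply, (hfg.laurent a).coe_eq_derivative, derivative_coeff_neg_one]

theorem residue_algebraMap_div_eq_zero {a : K} (u : K[X]) {w : K[X]} (hw : w.eval a ≠ 0) :
    residue a (algebraMap K[X] (RatFunc K) u / algebraMap K[X] (RatFunc K) w) = 0 := by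
  rw [residue_apply, laurent_div, algebraMap_apply_div]
  exact coeff_algebraMap_div_eq_zero_of_neg _ (by rwa [taylor_coeff_zero]) (by norm_num)

theorem residue_algebraMap_div_X_sub_C_pow_succ (a : K) (r : K[X]) (m : ℕ) :
    residue a (algebraMap K[X] (RatFunc K) r / (X - C a) ^ (m + 1)) = (taylor a r).coeff m := by
  rw [residue_apply, map_div₀, laurent_algebraMap, map_pow, map_sub, laurent_X, laurent_C,
    add_sub_cancel_right, map_div₀, map_pow, coe_X, ← IsScalarTower.algebraMap_apply,
    HahnSeries.single_pow, div_eq_mul_inv, HahnSeries.inv_single,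
    show (-1 : ℤ) = m + -((m + 1) • 1 : ℤ) by simp, HahnSeries.coeff_mul_single_add,
    coeff_algebraMap]
  simp

theorem residue_sum_algebraMap_div_X_sub_C_pow_succ {ι : Type*} [Fintype ι] {P : ι → K}
    (hP : Function.Injective P) (r : ι → K[X]) (m : ι → ℕ) (i : ι) :
    residue (P i) (∑ l, algebraMap K[X] (RatFunc K) (r l) / (X - C (P l)) ^ (m l + 1)) =
      (taylor (P i) (r i)).coeff (m i) := by
  rw [map_sum, Finset.sum_eq_single i (fun l _ hli => ?_) (by simp),
    residue_algebraMap_div_X_sub_C_pow_succ]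
  rw [X_sub_C_pow_eq_algebraMap]
  refine residue_algebraMap_div_eq_zero _ ?_
  simpa [sub_eq_zero] using hP.ne hli.symm

theorem exists_inv_prod_X_sub_C_pow_eq_sum {ι : Type*} [Fintype ι] [DecidableEq ι] {P : ι → K}
    (hP : Function.Injective P) {h : ι → ℕ} (hh : 0 < ∑ i, h i) :
    ∃ r : ι → K[X], (∀ i, (r i).degree < h i) ∧
      (∏ i, (X - C (P i)) ^ h i)⁻¹ =
        ∑ i, algebraMap K[X] (RatFunc K) (r i) / (X - C (P i)) ^ h i := by
  obtain ⟨r, hr, hsum⟩ := Polynomial.exists_eq_sum_mul_prod_erase (s := Finset.univ) (f := 1)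
    (g := fun i => (Polynomial.X - Polynomial.C (P i)) ^ h i)
    (fun i _ => (monic_X_sub_C (P i)).pow _)
    (fun i _ j _ hij => (pairwise_coprime_X_sub_C hP hij).pow)
    (by simpa [degree_prod, ← Nat.cast_sum] using hh)
  refine ⟨r, fun i => by simpa using hr i (Finset.mem_univ i), ?_⟩
  simp_rw [X_sub_C_pow_eq_algebraMap]
  rw [← Finset.sum_mul_prod_erase_div_prod _ _ _ fun i _ =>
    algebraMap_ne_zero (pow_ne_zero _ (X_sub_C_ne_zero (P i))), inv_eq_one_div,
    ← map_one (algebraMap K[X] (RatFunc K)), hsum]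
  simp [map_prod]

theorem exists_sum_div_X_sub_C_pow_eq_div_prod {ι : Type*} [Fintype ι] [DecidableEq ι]
    (P : ι → K) (m : ι → ℕ) {s : ι → K[X]} (hs : ∀ i, (s i).degree < m i) :
    ∃ g : K[X], g.degree < ∑ i, m i ∧
      ∑ i, algebraMap K[X] (RatFunc K) (s i) / (X - C (P i)) ^ m i =
        algebraMap K[X] (RatFunc K) g / ∏ i, (X - C (P i)) ^ m i := by
  have hg (i : ι) : (Polynomial.X - Polynomial.C (P i)) ^ m i ≠ 0 :=
    pow_ne_zero _ (X_sub_C_ne_zero (P i))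
  refine ⟨∑ i, s i * ∏ k ∈ Finset.univ.erase i, (Polynomial.X - Polynomial.C (P k)) ^ m k,
    ?_, ?_⟩
  · convert Polynomial.degree_sum_mul_prod_erase_lt (fun i _ => hg i)
      (fun i _ => by simpa using hs i)
    simp [degree_prod]
  · simp_rw [X_sub_C_pow_eq_algebraMap]
    rw [← Finset.sum_mul_prod_erase_div_prod _ _ _ fun i _ => algebraMap_ne_zero (hg i)]
    simp [map_prod]

end RatFunc

end RationalFunctions

theorem stmt15_general {k : Type*} [Field k] (p : ℕ) [CharP k p]
    (n : ℕ) (hn : 1 ≤ n) (h : Fin n → ℕ) (hh : ∀ i, 1 < h i ∧ h i < p)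
    (P : Fin n → k) (hP : Function.Injective P)
    (hex : IsExactRF ((∏ i, (RatFunc.X - RatFunc.C (P i)) ^ h i)⁻¹)) :
    ∃ g : Polynomial k, g.natDegree < ∑ i, (h i - 1) ∧
      HasDerivRF
        (algebraMap (Polynomial k) (RatFunc k) g /
          ∏ i, (RatFunc.X - RatFunc.C (P i)) ^ (h i - 1))
        ((∏ i, (RatFunc.X - RatFunc.C (P i)) ^ h i)⁻¹) := by
  classical
  obtain ⟨m, rfl⟩ : ∃ m : Fin n → ℕ, h = fun i => m i + 1 :=
    ⟨fun i => h i - 1, funext fun i => by dsimp only; have := (hh i).1; omega⟩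
  simp only [Nat.add_sub_cancel] at hh ⊢
  obtain ⟨r, hr, hF⟩ := RatFunc.exists_inv_prod_X_sub_C_pow_eq_sum hP (h := fun i => m i + 1)
    (Finset.sum_pos (fun i _ => Nat.succ_pos _) ⟨⟨0, hn⟩, Finset.mem_univ _⟩)
  obtain ⟨f, hf⟩ := hex
  have hres (i : Fin n) : (taylor (P i) (r i)).coeff (m i) = 0 := by
    rw [← RatFunc.residue_sum_algebraMap_div_X_sub_C_pow_succ hP, ← hF]
    exact hf.residue_eq_zero (P i)
  have hchar (i : Fin n) (j : ℕ) (hj : 0 < j) (hjm : j ≤ m i) : (j : k) ≠ 0 := by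
    rw [Ne, CharP.cast_eq_zero_iff k p]
    exact Nat.not_dvd_of_pos_of_lt hj (by have := (hh i).2; omega)
  choose s hs hsr using fun i => exists_hasDerivRF_algebraMap_div_X_sub_C_pow (P i)
    (Order.le_of_lt_succ (hr i)) (hres i) (hchar i)
  obtain ⟨g, hg, hgs⟩ := RatFunc.exists_sum_div_X_sub_C_pow_eq_div_prod P m hs
  refine ⟨g, ?_, hgs ▸ hF ▸ HasDerivRF.sum fun i _ => hsr i⟩
  have hm : 0 < ∑ i, m i := Finset.sum_pos' (fun i _ => Nat.zero_le _)
    ⟨⟨0, hn⟩, Finset.mem_univ _, by have := (hh ⟨0, hn⟩).1; omega⟩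
  rcases eq_or_ne g 0 with rfl | hg0
  · simpa using hm
  · exact (natDegree_lt_iff_degree_lt hg0).2 (by exact_mod_cast hg)

/-- If `F = 1/∏ (x - Pᵢ)^{hᵢ}` is exact (with `1 < hᵢ < p` and the `Pᵢ` distinct), then it is
the derivative of `g/∏ (x - Pᵢ)^{hᵢ - 1}` for some polynomial `g` of degree `< ∑ (hᵢ - 1)`. -/
theorem stmt15 {k : Type*} [Field k] (p : ℕ) [CharP k p] (hp : 0 < p)
    (n : ℕ) (hn : 1 ≤ n) (h : Fin n → ℕ) (hh : ∀ i, 1 < h i ∧ h i < p)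
    (P : Fin n → k) (hP : Function.Injective P)
    (hex : IsExactRF ((∏ i, (RatFunc.X - RatFunc.C (P i)) ^ h i)⁻¹)) :
    ∃ g : Polynomial k, g.natDegree < ∑ i, (h i - 1) ∧
      HasDerivRF
        (algebraMap (Polynomial k) (RatFunc k) g /
          ∏ i, (RatFunc.X - RatFunc.C (P i)) ^ (h i - 1))
        ((∏ i, (RatFunc.X - RatFunc.C (P i)) ^ h i)⁻¹) :=
  stmt15_general p n hn h hh P hP hex
end
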